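/- arXiv:1408.3021 — 5 statements merged into one kernel-verified Lean document; each statement's English description precedes it below -/
import Mathlib

section
/- Let f : ℝ → ℝ be continuous with f(t)/t³ ≤ f(s)/s³ whenever 0 < t < s or s < t < 0, and set F(s) = ∫₀^s f(t) dt. Then H(s) := s f(s) − 4F(s) ≥ 0 for every s ∈ ℝ. -/
open MeasureTheory intervalIntegral Set

/-!
For `s > 0` put `c = f s / s ^ n`: the monotonicity of `f t / t ^ n` gives `f t ≤ c t ^ n` on
`(0, s)`, and integrating yields `∫₀ˢ f ≤ c s ^ (n + 1) / (n + 1) = s f s / (n + 1)`.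
For odd `n` the reflection `t ↦ -f (-t)` preserves both the hypothesis and the quantity
`s f s - (n + 1) ∫₀ˢ f` while swapping the sign of `s`, so the case `s < 0` follows.
-/

theorem integral_le_mul_div_of_div_pow_le {f : ℝ → ℝ} {s : ℝ} (n : ℕ) (hs : 0 ≤ s)
    (hf : IntervalIntegrable f volume 0 s) (h : ∀ t ∈ Ioo 0 s, f t / t ^ n ≤ f s / s ^ n) :
    ∫ t in 0..s, f t ≤ s * f s / (n + 1) := by
  have hc : f s / s ^ n * s ^ (n + 1) = s * f s := by
    rcases hs.eq_or_lt with rfl | hs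
    · simp
    · field_simp; ring
  calc ∫ t in 0..s, f t
      ≤ ∫ t in 0..s, f s / s ^ n * t ^ n :=
        integral_mono_on_of_le_Ioo hs hf ((continuous_pow n).intervalIntegrable _ _ |>.const_mul _)
          fun t ht ↦ (div_le_iff₀ (pow_pos ht.1 n)).1 (h t ht)
    _ = s * f s / (n + 1) := by
        rw [intervalIntegral.integral_const_mul, integral_pow, ← hc]; ring

theorem integral_neg_comp_neg (f : ℝ → ℝ) (s : ℝ) :
    ∫ t in 0..-s, -f (-t) = ∫ t in 0..s, f t := by
  rw [intervalIntegral.integral_neg, integral_comp_neg, neg_neg, neg_zero, integral_symm, neg_neg]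

theorem integral_le_mul_div_of_div_pow_le_of_nonpos {f : ℝ → ℝ} {s : ℝ} {n : ℕ} (hn : Odd n)
    (hs : s ≤ 0) (hf : IntervalIntegrable f volume s 0)
    (h : ∀ t ∈ Ioo s 0, f t / t ^ n ≤ f s / s ^ n) :
    ∫ t in 0..s, f t ≤ s * f s / (n + 1) := by
  have hg : IntervalIntegrable (fun t ↦ -f (-t)) volume 0 (-s) := by
    have hf' := (IntervalIntegrable.iff_comp_neg).1 hf.symm
    rw [neg_zero] at hf'
    exact hf'.neg
  have key := integral_le_mul_div_of_div_pow_le n (neg_nonneg.2 hs) hg fun t ht ↦ by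
    have := h (-t) ⟨by linarith [ht.2], by linarith [ht.1]⟩
    simpa [hn.neg_pow, neg_div, div_neg] using this
  rwa [integral_neg_comp_neg, neg_neg, neg_mul_neg] at key

/-- If `f : ℝ → ℝ` is continuous and `f(s)/s³` is increasing in `|s|`
(i.e. `f(t)/t³ ≤ f(s)/s³` whenever `0 < t < s` or `s < t < 0`), then
`H(s) = s f(s) - 4 F(s) ≥ 0` for all `s`, where `F(s) = ∫₀ˢ f`. -/
theorem sign_changing_SP_H_nonneg
    (f : ℝ → ℝ) (hf : Continuous f)
    (hf4 : ∀ t s : ℝ, (0 < t ∧ t < s) ∨ (s < t ∧ t < 0) → f t / t ^ 3 ≤ f s / s ^ 3) :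
    ∀ s : ℝ, 0 ≤ s * f s - 4 * ∫ t in (0:ℝ)..s, f t := by
  intro s
  suffices ∫ t in 0..s, f t ≤ s * f s / (3 + 1) by linarith
  rcases le_total 0 s with hs | hs
  · exact integral_le_mul_div_of_div_pow_le 3 hs (hf.intervalIntegrable _ _)
      fun t ht ↦ hf4 t s (.inl ⟨ht.1, ht.2⟩)
  · exact integral_le_mul_div_of_div_pow_le_of_nonpos (by decide) hs (hf.intervalIntegrable _ _)
      fun t ht ↦ hf4 t s (.inr ⟨ht.1, ht.2⟩)
end

section
/- Let f : ℝ → ℝ be continuous with f(t)/t³ ≤ f(s)/s³ whenever 0 < t < s or s < t < 0, and set F(s) = ∫₀^s f(t) dt and H(s) = s f(s) − 4F(s). Then H is non-decreasing in |s| on each half-line: H(t) ≤ H(s) whenever 0 ≤ t ≤ s, and H(t) ≤ H(s) whenever s ≤ t ≤ 0. -/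
open MeasureTheory intervalIntegral

/-!
Write `c = f s / s³`. Monotonicity of `f(u)/u³` gives `f ≤ c u³` on `(0, s]`, so
`4 ∫ₜˢ f ≤ c (s⁴ - t⁴) = s f(s) - c t⁴ ≤ s f(s) - t f(t)` for `0 ≤ t ≤ s`, which is
`H(t) ≤ H(s)`. The negative half-line reduces to the positive one through the odd reflection
`u ↦ -f(-u)`, which preserves both the hypothesis and `H`.
-/

/-- Vanishes identically for `f(s) = c sⁿ`, whence the name. -/
noncomputable def homogeneityDefect (n : ℕ) (f : ℝ → ℝ) (s : ℝ) : ℝ :=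
  s * f s - (n + 1) * ∫ t in (0:ℝ)..s, f t

section

variable {n : ℕ} {f : ℝ → ℝ}

theorem le_div_pow_mul_pow_of_div_pow_mono
    (hmono : ∀ t s : ℝ, 0 < t → t < s → f t / t ^ n ≤ f s / s ^ n)
    {u s : ℝ} (hu : 0 < u) (hus : u ≤ s) : f u ≤ f s / s ^ n * u ^ n := by
  refine (div_le_iff₀ (pow_pos hu n)).1 ?_
  rcases hus.eq_or_lt with rfl | hus
  · exact le_rfl
  · exact hmono u s hu hus

theorem monotoneOn_homogeneityDefect (hf : Continuous f)
    (hmono : ∀ t s : ℝ, 0 < t → t < s → f t / t ^ n ≤ f s / s ^ n) :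
    MonotoneOn (homogeneityDefect n f) (Set.Ici 0) := by
  intro t (ht : 0 ≤ t) s _ hts
  rcases hts.eq_or_lt with rfl | hts'
  · exact le_rfl
  set c := f s / s ^ n
  have hs : 0 < s := ht.trans_lt hts'
  have hintegral : ∫ u in t..s, f u ≤ c * ((s ^ (n + 1) - t ^ (n + 1)) / (n + 1)) := by
    rw [← integral_pow, ← intervalIntegral.integral_const_mul]
    refine integral_mono_on_of_le_Ioo hts (hf.intervalIntegrable t s)
      ((continuous_const.mul (continuous_pow n)).intervalIntegrable t s)
      fun u hu ↦ le_div_pow_mul_pow_of_div_pow_mono hmono (ht.trans_lt hu.1) hu.2.le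
  have hleft : t * f t ≤ c * t ^ (n + 1) := by
    rcases ht.eq_or_lt with rfl | ht'
    · simp
    · calc t * f t ≤ t * (c * t ^ n) :=
            mul_le_mul_of_nonneg_left (le_div_pow_mul_pow_of_div_pow_mono hmono ht' hts) ht
        _ = c * t ^ (n + 1) := by ring
  have hright : s * f s = c * s ^ (n + 1) := by
    rw [pow_succ', mul_left_comm, div_mul_cancel₀ _ (pow_ne_zero n hs.ne')]
  have hsplit := integral_add_adjacent_intervals (μ := volume) (hf.intervalIntegrable 0 t)
    (hf.intervalIntegrable t s)
  rw [mul_div_assoc', le_div_iff₀ (by positivity)] at hintegral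
  simp only [homogeneityDefect, ← hsplit]
  linarith

theorem homogeneityDefect_neg_comp_neg (x : ℝ) :
    homogeneityDefect n (fun u ↦ -f (-u)) x = homogeneityDefect n f (-x) := by
  simp only [homogeneityDefect, intervalIntegral.integral_neg, integral_comp_neg, neg_zero]
  rw [integral_symm]
  ring

theorem antitoneOn_homogeneityDefect (hn : Odd n) (hf : Continuous f)
    (hmono : ∀ t s : ℝ, s < t → t < 0 → f t / t ^ n ≤ f s / s ^ n) :
    AntitoneOn (homogeneityDefect n f) (Set.Iic 0) := by
  have hreflect := monotoneOn_homogeneityDefect (f := fun u ↦ -f (-u)) (by fun_prop)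
    fun t s ht hts ↦ by
      simpa only [hn.neg_pow, div_neg, neg_div] using hmono (-t) (-s) (by linarith) (by linarith)
  intro a (ha : a ≤ 0) b (hb : b ≤ 0) hab
  simpa only [homogeneityDefect_neg_comp_neg, neg_neg] using
    hreflect (neg_nonneg.2 hb) (neg_nonneg.2 ha) (neg_le_neg hab)

end

/-- If `f : ℝ → ℝ` is continuous and `f(s)/s³` is increasing in `|s|`,
then `H(s) = s f(s) - 4 F(s)` (with `F(s) = ∫₀ˢ f`) is non-decreasing in `|s|` on each
half-line: `H(t) ≤ H(s)` whenever `0 ≤ t ≤ s`, and `H(t) ≤ H(s)` whenever `s ≤ t ≤ 0`. -/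
theorem sign_changing_SP_H_monotone
    (f : ℝ → ℝ) (hf : Continuous f)
    (hf4 : ∀ t s : ℝ, (0 < t ∧ t < s) ∨ (s < t ∧ t < 0) → f t / t ^ 3 ≤ f s / s ^ 3)
    (H : ℝ → ℝ) (hH : ∀ s : ℝ, H s = s * f s - 4 * ∫ t in (0:ℝ)..s, f t) :
    (∀ t s : ℝ, 0 ≤ t → t ≤ s → H t ≤ H s) ∧
    (∀ t s : ℝ, s ≤ t → t ≤ 0 → H t ≤ H s) := by
  obtain rfl : H = homogeneityDefect 3 f := by
    funext s
    rw [hH, homogeneityDefect]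
    norm_num
  refine ⟨fun t s ht hts ↦ ?_, fun t s hst ht ↦ ?_⟩
  · exact monotoneOn_homogeneityDefect hf (fun t s ht hts ↦ hf4 t s (.inl ⟨ht, hts⟩))
      ht (ht.trans hts) hts
  · exact antitoneOn_homogeneityDefect (by decide) hf
      (fun t s hst ht ↦ hf4 t s (.inr ⟨hst, ht⟩)) (hst.trans ht) ht hst
end

section
/- (Miranda's theorem in dimension 2.) Let a₁ < b₁ and a₂ < b₂ and let Ψ = (Ψ₁, Ψ₂) : [a₁,b₁] × [a₂,b₂] → ℝ² be continuous. Suppose Ψ₁(a₁, τ) > 0 and Ψ₁(b₁, τ) < 0 for all τ ∈ [a₂,b₂], and Ψ₂(ξ, a₂) > 0 and Ψ₂(ξ, b₂) < 0 for all ξ ∈ [a₁,b₁]. Then there exists (ξ₀, τ₀) ∈ [a₁,b₁] × [a₂,b₂] with Ψ(ξ₀, τ₀) = (0, 0). -/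
/-!
Label the points of a fine grid on the rectangle by `1` where `Ψ₁ > 0`, by `2` where
`Ψ₁ ≤ 0 < Ψ₂` and by `0` elsewhere. Count mod 2 the grid edges whose ends are labelled `1` and
`2`: each interior edge is counted by the two cells containing it, and on the boundary the sign
conditions leave exactly one such edge on the bottom side and none on the others, so some cell
has an odd number of them and hence carries all three labels. So the closed sets
`{Ψ₁ ≤ 0 ∧ Ψ₂ ≤ 0}`, `{Ψ₁ ≥ 0}` and `{Ψ₂ ≥ 0}` come arbitrarily close to each other at a single
place, and by compactness they meet.
-/

open Set

theorem Finset.sum_range_add_succ {R : Type*} [Ring R] [CharP R 2] (f : ℕ → R) (n : ℕ) :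
    ∑ i ∈ Finset.range n, (f i + f (i + 1)) = f 0 + f n := by
  simpa [CharTwo.sub_eq_add, add_comm] using Finset.sum_range_sub f n

theorem IsCompact.inter_inter_nonempty_of_forall_dist_lt {X : Type*} [PseudoMetricSpace X]
    {K F G : Set X} (hK : IsCompact K) (hF : IsClosed F) (hG : IsClosed G)
    (h : ∀ ε > 0, ∃ x ∈ K, ∃ y ∈ F, ∃ z ∈ G, dist x y < ε ∧ dist x z < ε) :
    (K ∩ F ∩ G).Nonempty := by
  obtain ⟨x₀, hx₀, y₀, hy₀, z₀, hz₀, -⟩ := h 1 one_pos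
  set g : X → ℝ := fun x => Metric.infDist x F + Metric.infDist x G
  obtain ⟨p, hpK, hmin⟩ := hK.exists_isMinOn ⟨x₀, hx₀⟩
    ((Metric.continuous_infDist_pt F).add (Metric.continuous_infDist_pt G)).continuousOn
  have hgp : g p ≤ 0 := by
    refine le_of_forall_pos_lt_add fun ε hε => ?_
    obtain ⟨x, hx, y, hy, z, hz, hxy, hxz⟩ := h (ε / 2) (half_pos hε)
    calc g p ≤ g x := hmin hx
      _ ≤ dist x y + dist x z :=
        add_le_add (Metric.infDist_le_dist_of_mem hy) (Metric.infDist_le_dist_of_mem hz)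
      _ < 0 + ε := by linarith
  have hpF := Metric.infDist_nonneg (x := p) (s := F)
  have hpG := Metric.infDist_nonneg (x := p) (s := G)
  exact ⟨p, ⟨hpK, (hF.mem_iff_infDist_zero ⟨y₀, hy₀⟩).2 (by linarith)⟩,
    (hG.mem_iff_infDist_zero ⟨z₀, hz₀⟩).2 (by linarith)⟩

namespace Miranda

def door (a b : Fin 3) : ZMod 2 := if a ≠ 0 ∧ b ≠ 0 ∧ a ≠ b then 1 else 0

def color (a : Fin 3) : ZMod 2 := if a = 2 then 1 else 0

theorem door_eq_zero_of_ne_one {a b : Fin 3} (ha : a ≠ 1) (hb : b ≠ 1) : door a b = 0 := by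
  revert a b; decide

theorem door_eq_zero_of_ne_two {a b : Fin 3} (ha : a ≠ 2) (hb : b ≠ 2) : door a b = 0 := by
  revert a b; decide

theorem door_eq_color_add_color {a b : Fin 3} (ha : a ≠ 0) (hb : b ≠ 0) :
    door a b = color a + color b := by
  revert a b; decide

/-- `a b` over `c d` are the corners of a grid cell. A cycle avoiding the label `0` passes
between `1` and `2` an even number of times. -/
theorem eq_or_eq_or_eq_or_eq_of_door_sum_ne_zero {a b c d : Fin 3}
    (h : door a b + door c d + (door a c + door b d) ≠ 0) (t : Fin 3) :
    t = a ∨ t = b ∨ t = c ∨ t = d := by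
  revert a b c d t; decide

theorem exists_cell_forall_label (n : ℕ) (L : ℕ → ℕ → Fin 3)
    (hleft : ∀ j ≤ n, L 0 j = 1) (hright : ∀ j ≤ n, L n j ≠ 1)
    (hbot : ∀ i ≤ n, L i 0 ≠ 0) (htop : ∀ i ≤ n, L i n ≠ 2) :
    ∃ i < n, ∃ j < n, ∀ t, ∃ u ∈ Icc i (i + 1), ∃ v ∈ Icc j (j + 1), L u v = t := by
  set H : ℕ → ℕ → ZMod 2 := fun i j => door (L i j) (L (i + 1) j)
  set V : ℕ → ℕ → ZMod 2 := fun i j => door (L i j) (L i (j + 1))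
  have hsum : ∑ i ∈ Finset.range n, ∑ j ∈ Finset.range n,
      (H i j + H i (j + 1) + (V i j + V (i + 1) j)) = 1 := by
    have hcorner : L n 0 = 2 := by
      have := hbot n le_rfl; have := hright 0 n.zero_le; omega
    calc _ = ∑ i ∈ Finset.range n, ∑ j ∈ Finset.range n, (H i j + H i (j + 1))
          + ∑ j ∈ Finset.range n, ∑ i ∈ Finset.range n, (V i j + V (i + 1) j) := by
          rw [Finset.sum_comm (f := fun j i => V i j + V (i + 1) j), ← Finset.sum_add_distrib]
          exact Finset.sum_congr rfl fun i _ => Finset.sum_add_distrib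
      _ = ∑ i ∈ Finset.range n, (H i 0 + H i n) + ∑ j ∈ Finset.range n, (V 0 j + V n j) := by
          simp only [Finset.sum_range_add_succ (H _), Finset.sum_range_add_succ (fun i => V i _)]
      _ = ∑ i ∈ Finset.range n, (color (L i 0) + color (L (i + 1) 0)) := by
          have hH : ∀ i ∈ Finset.range n, H i 0 + H i n = color (L i 0) + color (L (i + 1) 0) := by
            intro i hi
            rw [Finset.mem_range] at hi
            simp only [H]
            rw [door_eq_zero_of_ne_two (htop i hi.le) (htop (i + 1) hi), add_zero,
              door_eq_color_add_color (hbot i hi.le) (hbot (i + 1) hi)]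
          have hV : ∀ j ∈ Finset.range n, V 0 j + V n j = 0 := by
            intro j hj
            rw [Finset.mem_range] at hj
            simp only [V]
            rw [door_eq_zero_of_ne_one (hright j hj.le) (hright (j + 1) hj), hleft j hj.le,
              hleft (j + 1) hj]
            rfl
          rw [Finset.sum_congr rfl hH, Finset.sum_congr rfl hV, Finset.sum_const_zero, add_zero]
      _ = 1 := by simp [Finset.sum_range_add_succ, color, hleft 0 n.zero_le, hcorner]
  obtain ⟨i, hi, hrow⟩ := Finset.exists_ne_zero_of_sum_ne_zero (hsum ▸ one_ne_zero)
  obtain ⟨j, hj, hcell⟩ := Finset.exists_ne_zero_of_sum_ne_zero hrow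
  refine ⟨i, Finset.mem_range.1 hi, j, Finset.mem_range.1 hj, fun t => ?_⟩
  have hi₀ : i ∈ Icc i (i + 1) := left_mem_Icc.2 i.le_succ
  have hi₁ : i + 1 ∈ Icc i (i + 1) := right_mem_Icc.2 i.le_succ
  have hj₀ : j ∈ Icc j (j + 1) := left_mem_Icc.2 j.le_succ
  have hj₁ : j + 1 ∈ Icc j (j + 1) := right_mem_Icc.2 j.le_succ
  rcases eq_or_eq_or_eq_or_eq_of_door_sum_ne_zero hcell t with h | h | h | h
  exacts [⟨i, hi₀, j, hj₀, h.symm⟩, ⟨i + 1, hi₁, j, hj₀, h.symm⟩, ⟨i, hi₀, j + 1, hj₁, h.symm⟩,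
    ⟨i + 1, hi₁, j + 1, hj₁, h.symm⟩]

noncomputable def gridPoint (a b : ℝ) (N i : ℕ) : ℝ := a + i * ((b - a) / N)

section Grid

variable {a b : ℝ} {N : ℕ}

@[simp] theorem gridPoint_zero : gridPoint a b N 0 = a := by simp [gridPoint]

theorem gridPoint_self (hN : N ≠ 0) : gridPoint a b N N = b := by
  simp [gridPoint, mul_div_cancel₀ _ (Nat.cast_ne_zero.2 hN : (N : ℝ) ≠ 0)]

theorem gridPoint_mem_Icc (hab : a ≤ b) {i : ℕ} (hi : i ≤ N) : gridPoint a b N i ∈ Icc a b := by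
  rcases N.eq_zero_or_pos with rfl | hN
  · simp [Nat.le_zero.1 hi, hab]
  have hstep : 0 ≤ (b - a) / N := div_nonneg (sub_nonneg.2 hab) N.cast_nonneg
  have hi' : (i : ℝ) * ((b - a) / N) ≤ N * ((b - a) / N) :=
    mul_le_mul_of_nonneg_right (Nat.cast_le.2 hi) hstep
  rw [mul_div_cancel₀ _ (Nat.cast_ne_zero.2 hN.ne' : (N : ℝ) ≠ 0)] at hi'
  exact ⟨le_add_of_nonneg_right (mul_nonneg i.cast_nonneg hstep), by unfold gridPoint; linarith⟩

theorem dist_gridPoint_le (hab : a ≤ b) {i u v : ℕ} (hu : u ∈ Icc i (i + 1))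
    (hv : v ∈ Icc i (i + 1)) : dist (gridPoint a b N u) (gridPoint a b N v) ≤ (b - a) / N := by
  have hstep : 0 ≤ (b - a) / N := div_nonneg (sub_nonneg.2 hab) N.cast_nonneg
  have huv : |(u : ℝ) - v| ≤ 1 := by
    obtain ⟨hu₁, hu₂⟩ := hu
    obtain ⟨hv₁, hv₂⟩ := hv
    have h₁ : (u : ℝ) ≤ v + 1 := by exact_mod_cast (by omega : u ≤ v + 1)
    have h₂ : (v : ℝ) ≤ u + 1 := by exact_mod_cast (by omega : v ≤ u + 1)
    exact abs_sub_le_iff.2 ⟨by linarith, by linarith⟩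
  calc dist (gridPoint a b N u) (gridPoint a b N v) = |(u : ℝ) - v| * ((b - a) / N) := by
        rw [Real.dist_eq, ← abs_of_nonneg hstep, ← abs_mul, gridPoint, gridPoint]
        congr 1; ring
    _ ≤ (b - a) / N := mul_le_of_le_one_left hstep huv

end Grid

noncomputable def signLabel {α : Type*} (f g : α → ℝ) (x : α) : Fin 3 :=
  if 0 < f x then 1 else if 0 < g x then 2 else 0

section Label

variable {α : Type*} {f g : α → ℝ} {x : α}

theorem signLabel_eq_zero_iff : signLabel f g x = 0 ↔ f x ≤ 0 ∧ g x ≤ 0 := by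
  unfold signLabel; split_ifs <;> simp_all

theorem signLabel_eq_one_iff : signLabel f g x = 1 ↔ 0 < f x := by
  unfold signLabel; split_ifs <;> simp_all

theorem signLabel_eq_two_iff : signLabel f g x = 2 ↔ f x ≤ 0 ∧ 0 < g x := by
  unfold signLabel; split_ifs <;> simp_all

end Label

section Rectangle

variable {a₁ b₁ a₂ b₂ : ℝ} {Ψ₁ Ψ₂ : ℝ × ℝ → ℝ}

theorem exists_close_points_of_forall_face (hab₁ : a₁ ≤ b₁) (hab₂ : a₂ ≤ b₂)
    (h1a : ∀ τ ∈ Icc a₂ b₂, 0 < Ψ₁ (a₁, τ)) (h1b : ∀ τ ∈ Icc a₂ b₂, Ψ₁ (b₁, τ) < 0)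
    (h2a : ∀ ξ ∈ Icc a₁ b₁, 0 < Ψ₂ (ξ, a₂)) (h2b : ∀ ξ ∈ Icc a₁ b₁, Ψ₂ (ξ, b₂) < 0)
    {ε : ℝ} (hε : 0 < ε) :
    ∃ x ∈ Icc a₁ b₁ ×ˢ Icc a₂ b₂, ∃ y ∈ Icc a₁ b₁ ×ˢ Icc a₂ b₂, ∃ z ∈ Icc a₁ b₁ ×ˢ Icc a₂ b₂,
      (Ψ₁ x ≤ 0 ∧ Ψ₂ x ≤ 0) ∧ 0 < Ψ₁ y ∧ 0 < Ψ₂ z ∧ dist x y < ε ∧ dist x z < ε := by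
  obtain ⟨N, hN⟩ := exists_nat_gt ((b₁ - a₁ + (b₂ - a₂)) / ε)
  have hN₀ : (0 : ℝ) < N := (div_nonneg (by linarith) hε.le).trans_lt hN
  rw [div_lt_iff₀ hε] at hN
  have hmesh₁ : (b₁ - a₁) / N < ε := by rw [div_lt_iff₀ hN₀]; linarith
  have hmesh₂ : (b₂ - a₂) / N < ε := by rw [div_lt_iff₀ hN₀]; linarith
  set P : ℕ → ℕ → ℝ × ℝ := fun i j => (gridPoint a₁ b₁ N i, gridPoint a₂ b₂ N j)
  have hP : ∀ i ≤ N, ∀ j ≤ N, P i j ∈ Icc a₁ b₁ ×ˢ Icc a₂ b₂ := fun i hi j hj =>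
    ⟨gridPoint_mem_Icc hab₁ hi, gridPoint_mem_Icc hab₂ hj⟩
  have hNne : N ≠ 0 := Nat.cast_ne_zero.1 hN₀.ne'
  obtain ⟨i, hi, j, hj, hcell⟩ := exists_cell_forall_label N (fun i j => signLabel Ψ₁ Ψ₂ (P i j))
    (fun j hj => signLabel_eq_one_iff.2 (by simpa [P] using h1a _ (gridPoint_mem_Icc hab₂ hj)))
    (fun j hj h => (h1b _ (gridPoint_mem_Icc hab₂ hj)).not_ge <| by
      simpa [P, gridPoint_self hNne] using (signLabel_eq_one_iff.1 h).le)
    (fun i hi h => (h2a _ (gridPoint_mem_Icc hab₁ hi)).not_ge <| by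
      simpa [P] using (signLabel_eq_zero_iff.1 h).2)
    (fun i hi h => (h2b _ (gridPoint_mem_Icc hab₁ hi)).not_ge <| by
      simpa [P, gridPoint_self hNne] using (signLabel_eq_two_iff.1 h).2.le)
  have hdist : ∀ u ∈ Icc i (i + 1), ∀ v ∈ Icc j (j + 1), ∀ u' ∈ Icc i (i + 1),
      ∀ v' ∈ Icc j (j + 1), dist (P u v) (P u' v') < ε := fun u hu v hv u' hu' v' hv' =>
    max_lt ((dist_gridPoint_le hab₁ hu hu').trans_lt hmesh₁)
      ((dist_gridPoint_le hab₂ hv hv').trans_lt hmesh₂)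
  obtain ⟨u₀, hu₀, v₀, hv₀, h₀⟩ := hcell 0
  obtain ⟨u₁, hu₁, v₁, hv₁, h₁⟩ := hcell 1
  obtain ⟨u₂, hu₂, v₂, hv₂, h₂⟩ := hcell 2
  exact ⟨P u₀ v₀, hP _ (hu₀.2.trans hi) _ (hv₀.2.trans hj), P u₁ v₁, hP _ (hu₁.2.trans hi) _
    (hv₁.2.trans hj), P u₂ v₂, hP _ (hu₂.2.trans hi) _ (hv₂.2.trans hj),
    signLabel_eq_zero_iff.1 h₀, signLabel_eq_one_iff.1 h₁, (signLabel_eq_two_iff.1 h₂).2,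
    hdist _ hu₀ _ hv₀ _ hu₁ _ hv₁, hdist _ hu₀ _ hv₀ _ hu₂ _ hv₂⟩

end Rectangle

end Miranda

/-- **Miranda's theorem in dimension 2.** Let `Ψ = (Ψ₁, Ψ₂)` be continuous
on the rectangle `[a₁,b₁] × [a₂,b₂]`, with `Ψ₁ > 0` on the face `ξ = a₁`, `Ψ₁ < 0` on the
face `ξ = b₁`, `Ψ₂ > 0` on the face `τ = a₂` and `Ψ₂ < 0` on the face `τ = b₂`. Then `Ψ`
vanishes somewhere in the rectangle. -/
theorem miranda_dim2
    (a₁ b₁ a₂ b₂ : ℝ) (hab₁ : a₁ < b₁) (hab₂ : a₂ < b₂)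
    (Ψ₁ Ψ₂ : ℝ × ℝ → ℝ)
    (hcont : ContinuousOn (fun p : ℝ × ℝ => (Ψ₁ p, Ψ₂ p)) (Icc a₁ b₁ ×ˢ Icc a₂ b₂))
    (h1a : ∀ τ ∈ Icc a₂ b₂, 0 < Ψ₁ (a₁, τ))
    (h1b : ∀ τ ∈ Icc a₂ b₂, Ψ₁ (b₁, τ) < 0)
    (h2a : ∀ ξ ∈ Icc a₁ b₁, 0 < Ψ₂ (ξ, a₂))
    (h2b : ∀ ξ ∈ Icc a₁ b₁, Ψ₂ (ξ, b₂) < 0) :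
    ∃ p ∈ Icc a₁ b₁ ×ˢ Icc a₂ b₂, Ψ₁ p = 0 ∧ Ψ₂ p = 0 := by
  have hR : IsCompact (Icc a₁ b₁ ×ˢ Icc a₂ b₂) := isCompact_Icc.prod isCompact_Icc
  have hK := hcont.preimage_isClosed_of_isClosed hR.isClosed (isClosed_Iic (a := 0))
  have hF₁ := hcont.fst.preimage_isClosed_of_isClosed hR.isClosed (isClosed_Ici (a := 0))
  have hF₂ := hcont.snd.preimage_isClosed_of_isClosed hR.isClosed (isClosed_Ici (a := 0))
  obtain ⟨p, ⟨⟨hpR, hp⟩, -, hp₁⟩, -, hp₂⟩ :=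
    (hR.of_isClosed_subset hK inter_subset_left).inter_inter_nonempty_of_forall_dist_lt hF₁ hF₂
      fun ε hε => by
        obtain ⟨x, hx, y, hy, z, hz, hx₀, hy₁, hz₂, hxy, hxz⟩ :=
          Miranda.exists_close_points_of_forall_face hab₁.le hab₂.le h1a h1b h2a h2b hε
        exact ⟨x, ⟨hx, Prod.le_def.2 hx₀⟩, y, ⟨hy, hy₁.le⟩, z, ⟨hz, hz₂.le⟩, hxy, hxz⟩
  exact ⟨p, hpR, le_antisymm (Prod.le_def.1 hp).1 hp₁, le_antisymm (Prod.le_def.1 hp).2 hp₂⟩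
end

section
/- Let δ, C > 0 and let h₁, h₂ : ℝ³ → ℝ be measurable functions satisfying ∫_{|x| ≥ R} h_i(x)² dx ≤ C e^{−δR} for every R ≥ 0 and i = 1, 2. Then for every n ≥ 0, ∫_{ℝ³} |h₁(x) h₂(x − n e₁)| dx ≤ 2C e^{−δn/4}, where e₁ = (1,0,0). -/
/-!
Split ℝ³ at the sphere of radius `n / 2`. Outside it `h₁` has `L²` mass at most `C e^{-δn/2}`;
inside it the translate `h₂(· - n e₁)` only sees `h₂` at distance at least `n / 2` from the origin,
so it has mass at most `C e^{-δn/2}` there. On each piece Cauchy–Schwarz, with the other factor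
bounded by its total mass `C`, gives `√(C e^{-δn/2} · C) = C e^{-δn/4}`.
-/

open MeasureTheory

section CauchySchwarz

variable {α : Type*} [MeasurableSpace α] {μ : Measure α} {f g : α → ℝ}

theorem integral_abs_mul_le_sqrt_mul (hf : MemLp f 2 μ) (hg : MemLp g 2 μ) :
    ∫ a, |f a * g a| ∂μ ≤ √((∫ a, f a ^ 2 ∂μ) * ∫ a, g a ^ 2 ∂μ) := by
  have holder := integral_mul_norm_le_Lp_mul_Lq (μ := μ) Real.HolderConjugate.two_two
    (by simpa using hf) (by simpa using hg)
  simp only [Real.norm_eq_abs, Real.rpow_two, sq_abs, ← abs_mul] at holder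
  rwa [Real.sqrt_mul (integral_nonneg fun _ ↦ sq_nonneg _), Real.sqrt_eq_rpow, Real.sqrt_eq_rpow]

theorem integral_abs_mul_le_two_mul_sqrt {s : Set α} (hs : MeasurableSet s)
    (hf : MemLp f 2 μ) (hg : MemLp g 2 μ) {a b : ℝ}
    (hfs : ∫ x in s, f x ^ 2 ∂μ ≤ a) (hgs : ∫ x in s, g x ^ 2 ∂μ ≤ b)
    (hfc : ∫ x in sᶜ, f x ^ 2 ∂μ ≤ b) (hgc : ∫ x in sᶜ, g x ^ 2 ∂μ ≤ a) :
    ∫ x, |f x * g x| ∂μ ≤ 2 * √(a * b) := by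
  have piece : ∀ t : Set α, ∀ {a b : ℝ}, ∫ x in t, f x ^ 2 ∂μ ≤ a → ∫ x in t, g x ^ 2 ∂μ ≤ b →
      ∫ x in t, |f x * g x| ∂μ ≤ √(a * b) := fun t {a b} hft hgt ↦
    (integral_abs_mul_le_sqrt_mul (hf.restrict t) (hg.restrict t)).trans <| Real.sqrt_le_sqrt <|
      mul_le_mul hft hgt (integral_nonneg fun _ ↦ sq_nonneg _)
        ((integral_nonneg fun _ ↦ sq_nonneg _).trans hft)
  have hint : Integrable (fun x ↦ |f x * g x|) μ := (hf.integrable_mul hg).abs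
  rw [← integral_add_compl hs hint, two_mul]
  exact add_le_add (piece s hfs hgs) (mul_comm a b ▸ piece sᶜ hfc hgc)

end CauchySchwarz

theorem le_norm_sub_of_norm_lt {E : Type*} [SeminormedAddCommGroup E] {x e : E} {r : ℝ}
    (hx : ‖x‖ < r) (he : 2 * r ≤ ‖e‖) : r ≤ ‖x - e‖ := by
  have := norm_sub_norm_le e x
  rw [norm_sub_rev] at this
  linarith

theorem setIntegral_comp_sub_right_le {G : Type*} [MeasurableSpace G] [AddGroup G]
    [MeasurableAdd G] {μ : Measure G} [μ.IsAddRightInvariant] {f : G → ℝ} (hf₀ : ∀ y, 0 ≤ f y)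
    (hf : Integrable f μ) {s t : Set G} {e : G} (hst : s ⊆ (· - e) ⁻¹' t) :
    ∫ x in s, f (x - e) ∂μ ≤ ∫ y in t, f y ∂μ := by
  calc ∫ x in s, f (x - e) ∂μ ≤ ∫ x in (· - e) ⁻¹' t, f (x - e) ∂μ :=
        setIntegral_mono_set (hf.comp_sub_right e).integrableOn
          (.of_forall fun x ↦ hf₀ (x - e)) hst.eventuallyLE
    _ = ∫ y in t, f y ∂μ :=
        (measurePreserving_sub_right μ e).setIntegral_preimage_emb
          (MeasurableEquiv.subRight e).measurableEmbedding f t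

theorem translated_product_decay_general
    (δ C : ℝ) (hC : 0 < C)
    (h₁ h₂ : EuclideanSpace ℝ (Fin 3) → ℝ)
    (hm₁ : Measurable h₁) (hm₂ : Measurable h₂)
    (hL₁ : Integrable (fun x => (h₁ x) ^ 2)) (hL₂ : Integrable (fun x => (h₂ x) ^ 2))
    (hdecay₁ : ∀ R : ℝ, 0 ≤ R →
      (∫ x in {x : EuclideanSpace ℝ (Fin 3) | R ≤ ‖x‖}, (h₁ x) ^ 2) ≤ C * Real.exp (-δ * R))
    (hdecay₂ : ∀ R : ℝ, 0 ≤ R →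
      (∫ x in {x : EuclideanSpace ℝ (Fin 3) | R ≤ ‖x‖}, (h₂ x) ^ 2) ≤ C * Real.exp (-δ * R))
    (n : ℝ) (hn : 0 ≤ n) :
    (∫ x : EuclideanSpace ℝ (Fin 3),
        |h₁ x * h₂ (x - n • EuclideanSpace.single (0 : Fin 3) (1:ℝ))|)
      ≤ 2 * C * Real.exp (-δ * n / 4) := by
  set e := n • EuclideanSpace.single (0 : Fin 3) (1:ℝ)
  set A := {x : EuclideanSpace ℝ (Fin 3) | n / 2 ≤ ‖x‖}
  set g := fun x ↦ h₂ (x - e)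
  have hne : ‖e‖ = n := by simp [e, norm_smul, abs_of_nonneg hn]
  have hA : MeasurableSet A := measurableSet_le measurable_const measurable_norm
  have hM₁ : MemLp h₁ 2 := (memLp_two_iff_integrable_sq hm₁.aestronglyMeasurable).2 hL₁
  have hMg : MemLp g 2 :=
    ((memLp_two_iff_integrable_sq hm₂.aestronglyMeasurable).2 hL₂).comp_measurePreserving
      (measurePreserving_sub_right volume e)
  have htot₁ : ∫ x, h₁ x ^ 2 ≤ C := by simpa using hdecay₁ 0 le_rfl
  have htot₂ : ∫ x in Set.univ, h₂ x ^ 2 ≤ C := by simpa using hdecay₂ 0 le_rfl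
  have hfA : ∫ x in A, h₁ x ^ 2 ≤ C * Real.exp (-δ * (n / 2)) := hdecay₁ (n / 2) (by positivity)
  have hgA : ∫ x in A, g x ^ 2 ≤ C :=
    (setIntegral_comp_sub_right_le (fun y ↦ sq_nonneg (h₂ y)) hL₂ (Set.subset_univ _)).trans htot₂
  have hfAc : ∫ x in Aᶜ, h₁ x ^ 2 ≤ C :=
    (setIntegral_le_integral hL₁ (.of_forall fun _ ↦ sq_nonneg _)).trans htot₁
  have hgAc : ∫ x in Aᶜ, g x ^ 2 ≤ C * Real.exp (-δ * (n / 2)) :=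
    (setIntegral_comp_sub_right_le (fun y ↦ sq_nonneg (h₂ y)) hL₂ fun x hx ↦
      le_norm_sub_of_norm_lt (not_le.1 hx) (by linarith)).trans (hdecay₂ (n / 2) (by positivity))
  have hsqrt : √(C * Real.exp (-δ * (n / 2)) * C) = C * Real.exp (-δ * n / 4) := by
    rw [← Real.sqrt_sq (by positivity : 0 ≤ C * Real.exp (-δ * n / 4)), mul_pow,
      ← Real.exp_nat_mul]
    ring_nf
  calc ∫ x, |h₁ x * g x| ≤ 2 * √(C * Real.exp (-δ * (n / 2)) * C) :=
        integral_abs_mul_le_two_mul_sqrt hA hM₁ hMg hfA hgA hfAc hgAc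
    _ = 2 * C * Real.exp (-δ * n / 4) := by rw [hsqrt, mul_assoc]

/-- Let `δ, C > 0` and let `h₁, h₂ : ℝ³ → ℝ` be square-integrable
functions whose `L²` mass outside the ball of radius `R` is at most `C e^{-δR}` for every
`R ≥ 0`. Then for every `n ≥ 0`,
`∫ |h₁(x) h₂(x - n e₁)| dx ≤ 2 C e^{-δn/4}`, where `e₁ = (1,0,0)`. -/
theorem translated_product_decay
    (δ C : ℝ) (hδ : 0 < δ) (hC : 0 < C)
    (h₁ h₂ : EuclideanSpace ℝ (Fin 3) → ℝ)
    (hm₁ : Measurable h₁) (hm₂ : Measurable h₂)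
    (hL₁ : Integrable (fun x => (h₁ x) ^ 2)) (hL₂ : Integrable (fun x => (h₂ x) ^ 2))
    (hdecay₁ : ∀ R : ℝ, 0 ≤ R →
      (∫ x in {x : EuclideanSpace ℝ (Fin 3) | R ≤ ‖x‖}, (h₁ x) ^ 2) ≤ C * Real.exp (-δ * R))
    (hdecay₂ : ∀ R : ℝ, 0 ≤ R →
      (∫ x in {x : EuclideanSpace ℝ (Fin 3) | R ≤ ‖x‖}, (h₂ x) ^ 2) ≤ C * Real.exp (-δ * R))
    (n : ℝ) (hn : 0 ≤ n) :
    (∫ x : EuclideanSpace ℝ (Fin 3),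
        |h₁ x * h₂ (x - n • EuclideanSpace.single (0 : Fin 3) (1:ℝ))|)
      ≤ 2 * C * Real.exp (-δ * n / 4) :=
  translated_product_decay_general δ C hC h₁ h₂ hm₁ hm₂ hL₁ hL₂ hdecay₁ hdecay₂ n hn
end

section
/- Let f : ℝ → ℝ be continuous with f(t)/t³ ≤ f(s)/s³ whenever 0 < t < s or s < t < 0, set F(s) = ∫₀^s f(t) dt, and let V : ℝ³ → ℝ be measurable with V ≥ 0. Let u : ℝ³ → ℝ be continuously differentiable with compact support and suppose the Nehari identity ∫_{ℝ³}(|∇u|² + V u²) dx + ∫_{ℝ³} φ_u u² dx = ∫_{ℝ³} f(u)u dx holds. Then J(u) := ½∫_{ℝ³}(|∇u|² + V u²) dx + ¼∫_{ℝ³} φ_u u² dx − ∫_{ℝ³} F(u) dx ≥ ¼ ∫_{ℝ³}(|∇u|² + V u²) dx. -/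
open MeasureTheory intervalIntegral

/-- The Newtonian potential of `u²`, for `u : ℝ³ → ℝ`. -/
noncomputable def phiu (u : EuclideanSpace ℝ (Fin 3) → ℝ)
    (x : EuclideanSpace ℝ (Fin 3)) : ℝ :=
  (1 / (4 * Real.pi)) * ∫ y : EuclideanSpace ℝ (Fin 3), (u y) ^ 2 / ‖x - y‖

/-!
Since `f(s)/s³` grows with `|s|`, on the interval between `0` and `s` the function `f` lies on
the correct side of the cubic `t ↦ (f(s)/s³) t³`, whose integral is `f(s) s / 4`; hence
`F(s) ≤ f(s) s / 4`. Integrating along `u` and using the Nehari identity,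
`J(u) - ¼∫(|∇u|² + V u²) = ¼∫(|∇u|² + V u²) + ¼∫φ_u u² - ∫F(u) ≥ ¼(∫(|∇u|² + V u²) + ∫φ_u u² - ∫f(u)u) = 0`.
-/

theorem intervalIntegral_le_mul_div_of_div_pow_le {f : ℝ → ℝ} {n : ℕ} {s : ℝ} (hs : 0 < s)
    (hfi : IntervalIntegrable f volume 0 s)
    (hmono : ∀ t ∈ Set.Ioo 0 s, f t / t ^ n ≤ f s / s ^ n) :
    ∫ t in (0 : ℝ)..s, f t ≤ f s * s / (n + 1) := by
  have hcubic : ∀ t ∈ Set.Ioo 0 s, f t ≤ f s / s ^ n * t ^ n := fun t ht =>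
    (div_le_iff₀ (pow_pos ht.1 n)).mp (hmono t ht)
  calc ∫ t in (0 : ℝ)..s, f t
      ≤ ∫ t in (0 : ℝ)..s, f s / s ^ n * t ^ n :=
        integral_mono_on_of_le_Ioo hs.le hfi
          ((continuous_const.mul (continuous_pow n)).intervalIntegrable _ _) hcubic
    _ = f s * s / (n + 1) := by
        rw [intervalIntegral.integral_const_mul, integral_pow]
        field_simp
        ring

theorem intervalIntegral_le_mul_div_of_div_pow_mono {f : ℝ → ℝ} (hf : Continuous f) {n : ℕ}
    (hn : Odd n)
    (hmono : ∀ t s : ℝ, (0 < t ∧ t < s) ∨ (s < t ∧ t < 0) → f t / t ^ n ≤ f s / s ^ n)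
    (s : ℝ) : ∫ t in (0 : ℝ)..s, f t ≤ f s * s / (n + 1) := by
  rcases lt_trichotomy s 0 with hs | rfl | hs
  · -- reflect: `g t = -f (-t)` satisfies the hypothesis on `(0, -s)` because `n` is odd
    set g : ℝ → ℝ := fun t => -f (-t)
    have hreflect : ∫ t in (0 : ℝ)..s, f t = ∫ t in (0 : ℝ)..(-s), g t := by
      rw [intervalIntegral.integral_neg, integral_comp_neg, neg_neg, neg_zero, integral_symm 0 s,
        neg_neg]
    have hg : ∀ t ∈ Set.Ioo 0 (-s), g t / t ^ n ≤ g (-s) / (-s) ^ n := by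
      intro t ht
      have h := hmono (-t) s (Or.inr ⟨by linarith [ht.2], by linarith [ht.1]⟩)
      simpa only [g, neg_neg, hn.neg_pow, neg_div, div_neg] using h
    have := intervalIntegral_le_mul_div_of_div_pow_le (f := g) (neg_pos.mpr hs)
      ((show Continuous g by fun_prop).intervalIntegrable _ _) hg
    simpa only [hreflect, g, neg_neg, neg_mul_neg] using this
  · simp
  · exact intervalIntegral_le_mul_div_of_div_pow_le hs (hf.intervalIntegrable _ _)
      fun t ht => hmono t s (Or.inl ht)

theorem integral_primitive_comp_le {X : Type*} [TopologicalSpace X] [MeasurableSpace X]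
    [OpensMeasurableSpace X] (μ : Measure X) [IsFiniteMeasureOnCompacts μ]
    {f : ℝ → ℝ} (hf : Continuous f) {n : ℕ} (hn : Odd n)
    (hmono : ∀ t s : ℝ, (0 < t ∧ t < s) ∨ (s < t ∧ t < 0) → f t / t ^ n ≤ f s / s ^ n)
    {u : X → ℝ} (hu : Continuous u) (husupp : HasCompactSupport u) :
    ∫ x, (∫ t in (0 : ℝ)..u x, f t) ∂μ ≤ (∫ x, f (u x) * u x ∂μ) / (n + 1) := by
  have hF : Continuous fun s : ℝ => ∫ t in (0 : ℝ)..s, f t :=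
    continuous_primitive (fun _ _ => hf.intervalIntegrable _ _) 0
  have hFu : Integrable (fun x => ∫ t in (0 : ℝ)..u x, f t) μ :=
    (hF.comp hu).integrable_of_hasCompactSupport
      (husupp.comp_left (g := fun s => ∫ t in (0 : ℝ)..s, f t) integral_same)
  have hfu : Integrable (fun x => f (u x) * u x) μ :=
    ((hf.comp hu).mul hu).integrable_of_hasCompactSupport
      (husupp.comp_left (g := fun s => f s * s) (mul_zero _))
  rw [← MeasureTheory.integral_div]
  exact integral_mono hFu (hfu.div_const _)
    fun x => intervalIntegral_le_mul_div_of_div_pow_mono hf hn hmono (u x)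

theorem energy_lower_bound_on_Nehari_general
    (f : ℝ → ℝ) (hf : Continuous f)
    (hf4 : ∀ t s : ℝ, (0 < t ∧ t < s) ∨ (s < t ∧ t < 0) → f t / t ^ 3 ≤ f s / s ^ 3)
    (V : EuclideanSpace ℝ (Fin 3) → ℝ)
    (u : EuclideanSpace ℝ (Fin 3) → ℝ)
    (hu : ContDiff ℝ 1 u) (husupp : HasCompactSupport u)
    (hNehari :
      (∫ x : EuclideanSpace ℝ (Fin 3), (‖fderiv ℝ u x‖ ^ 2 + V x * (u x) ^ 2))
        + (∫ x : EuclideanSpace ℝ (Fin 3), phiu u x * (u x) ^ 2)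
        = ∫ x : EuclideanSpace ℝ (Fin 3), f (u x) * u x) :
    (1 / 2) * (∫ x : EuclideanSpace ℝ (Fin 3), (‖fderiv ℝ u x‖ ^ 2 + V x * (u x) ^ 2))
      + (1 / 4) * (∫ x : EuclideanSpace ℝ (Fin 3), phiu u x * (u x) ^ 2)
      - (∫ x : EuclideanSpace ℝ (Fin 3), ∫ t in (0:ℝ)..(u x), f t)
    ≥ (1 / 4) * ∫ x : EuclideanSpace ℝ (Fin 3), (‖fderiv ℝ u x‖ ^ 2 + V x * (u x) ^ 2) := by
  have hF := integral_primitive_comp_le volume hf (by decide) hf4 hu.continuous husupp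
  norm_num at hF
  linarith

/-- Let `f : ℝ → ℝ` be continuous with `f(s)/s³` increasing in `|s|`,
`F(s) = ∫₀ˢ f`, and `V : ℝ³ → ℝ` measurable with `V ≥ 0`. If `u : ℝ³ → ℝ` is `C¹` with
compact support and satisfies the Nehari identity
`∫ (|∇u|² + V u²) + ∫ φ_u u² = ∫ f(u) u`, then
`J(u) = ½ ∫ (|∇u|² + V u²) + ¼ ∫ φ_u u² - ∫ F(u) ≥ ¼ ∫ (|∇u|² + V u²)`. -/
theorem energy_lower_bound_on_Nehari
    (f : ℝ → ℝ) (hf : Continuous f)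
    (hf4 : ∀ t s : ℝ, (0 < t ∧ t < s) ∨ (s < t ∧ t < 0) → f t / t ^ 3 ≤ f s / s ^ 3)
    (V : EuclideanSpace ℝ (Fin 3) → ℝ) (hVmeas : Measurable V) (hV : ∀ x, 0 ≤ V x)
    (u : EuclideanSpace ℝ (Fin 3) → ℝ)
    (hu : ContDiff ℝ 1 u) (husupp : HasCompactSupport u)
    (hNehari :
      (∫ x : EuclideanSpace ℝ (Fin 3), (‖fderiv ℝ u x‖ ^ 2 + V x * (u x) ^ 2))
        + (∫ x : EuclideanSpace ℝ (Fin 3), phiu u x * (u x) ^ 2)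
        = ∫ x : EuclideanSpace ℝ (Fin 3), f (u x) * u x) :
    (1 / 2) * (∫ x : EuclideanSpace ℝ (Fin 3), (‖fderiv ℝ u x‖ ^ 2 + V x * (u x) ^ 2))
      + (1 / 4) * (∫ x : EuclideanSpace ℝ (Fin 3), phiu u x * (u x) ^ 2)
      - (∫ x : EuclideanSpace ℝ (Fin 3), ∫ t in (0:ℝ)..(u x), f t)
    ≥ (1 / 4) * ∫ x : EuclideanSpace ℝ (Fin 3), (‖fderiv ℝ u x‖ ^ 2 + V x * (u x) ^ 2) :=
  energy_lower_bound_on_Nehari_general f hf hf4 V u hu husupp hNehari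
end
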